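/- Let n_1,…,n_t, n_0 be nonnegative integers and n = n_1 + … + n_t + n_0. For 𝛌 = (λ_1,…,λ_t,λ_0), where λ_j is a partition of n_j for j = 1,…,t and λ_0 is a symplectic partition of 2n_0, set cup(𝛌) = (λ_1 ∪ λ_1) ∪ … ∪ (λ_t ∪ λ_t) ∪ λ_0 (a symplectic partition of 2n) and d(𝛌) = (^tλ_1,…,^tλ_t, d(λ_0)). For μ = (μ_1,…,μ_t,μ_0), where μ_j is a partition of n_j and μ_0 is an orthogonal partition of 2n_0+1, define ind(μ) to be the greatest orthogonal partition of 2n+1 that is ≤ (μ_1+μ_1) + … + (μ_t+μ_t) + μ_0 in the dominance order. Then d(cup(𝛌)) = ind(d(𝛌)). -/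

import Mathlib

open Classical

namespace Wald

/-- `S f k = λ_1 + … + λ_k` (partitions are indexed from 1; index 0 is unused). -/
def S (f : ℕ → ℕ) (k : ℕ) : ℕ := ∑ j ∈ Finset.Icc 1 k, f j

/-- `f` represents a partition of `N`: nonincreasing on indices `≥ 1`,
finitely many nonzero terms, with total sum `N`. -/
structure IsPartition (f : ℕ → ℕ) (N : ℕ) : Prop where
  mono : ∀ ⦃j k : ℕ⦄, 1 ≤ j → j ≤ k → f k ≤ f j
  fin : ∃ m, ∀ j, m < j → f j = 0
  total : ∀ m, (∀ j, m < j → f j = 0) → S f m = N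

/-- multiplicity of `i` as a term of the partition -/
noncomputable def mult (f : ℕ → ℕ) (i : ℕ) : ℕ := Set.ncard {j : ℕ | 1 ≤ j ∧ f j = i}

/-- dominance order: `Dom f g ↔ f ≤ g` -/
def Dom (f g : ℕ → ℕ) : Prop := ∀ k, S f k ≤ S g k

/-- transposed partition: `(transpose f) j = #{i ≥ 1 : f i ≥ j}` for `j ≥ 1` -/
noncomputable def transpose (f : ℕ → ℕ) : ℕ → ℕ :=
  fun j => Set.ncard {i : ℕ | 1 ≤ i ∧ 1 ≤ j ∧ j ≤ f i}

/-- union of two partitions (all terms listed together in nonincreasing order);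
it is characterized by `transpose (unionP f g) = transpose f + transpose g`. -/
noncomputable def unionP (f g : ℕ → ℕ) : ℕ → ℕ :=
  transpose (fun j => transpose f j + transpose g j)

/-- the partition `(1)` -/
def one1 : ℕ → ℕ := fun j => if j = 1 then 1 else 0

/-- symplectic partition: every odd `i ≥ 1` has even multiplicity -/
def Symp (f : ℕ → ℕ) : Prop := ∀ i, Odd i → Even (mult f i)

/-- orthogonal partition: every even `i ≥ 2` has even multiplicity -/
def Orth (f : ℕ → ℕ) : Prop := ∀ i, Even i → 1 ≤ i → Even (mult f i)

/-- `λ_{2j-1} ≡ λ_{2j} (mod 2)` for all `j ≥ 1` (speciality for symplectic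
partitions of `2n` and orthogonal partitions of `2n`). -/
def SpecialPairs (f : ℕ → ℕ) : Prop := ∀ j, 1 ≤ j → f (2*j - 1) % 2 = f (2*j) % 2

/-- speciality for orthogonal partitions of `2n+1`: `λ_1` odd and
`λ_{2j} ≡ λ_{2j+1} (mod 2)` for all `j ≥ 1`. -/
def SpecialOrthOdd (f : ℕ → ℕ) : Prop :=
  Odd (f 1) ∧ ∀ j, 1 ≤ j → f (2*j) % 2 = f (2*j + 1) % 2

/-- `Jord_bp` for symplectic partitions: even `i ≥ 2` with positive multiplicity -/
def JordbpS (f : ℕ → ℕ) : Set ℕ := {i | Even i ∧ 2 ≤ i ∧ 1 ≤ mult f i}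

/-- `Jord_bp` for orthogonal partitions: odd `i ≥ 1` with positive multiplicity -/
def JordbpO (f : ℕ → ℕ) : Set ℕ := {i | Odd i ∧ 1 ≤ mult f i}

/-- the set `{i_1 > … > i_m}` of terms with odd multiplicity -/
def OddSet (f : ℕ → ℕ) : Set ℕ := {i | Odd (mult f i)}

/-- for special symplectic partitions: `{i_1 > … > i_{m'}}`, with `0` added if `m` is odd -/
def Dsymp (f : ℕ → ℕ) : Set ℕ :=
  {i | Odd (mult f i) ∨ (i = 0 ∧ Odd (OddSet f).ncard)}

/-- `a = i_{2h-1}` and `b = i_{2h}` for some `h`: consecutive elements of `Dsymp f`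
with an even number of elements of `Dsymp f` above `a`. -/
def PairedS (f : ℕ → ℕ) (a b : ℕ) : Prop :=
  b < a ∧ a ∈ Dsymp f ∧ b ∈ Dsymp f ∧ Even ((Dsymp f ∩ Set.Ioi a).ncard) ∧
    Dsymp f ∩ Set.Ioo b a = ∅

/-- intervals of a special symplectic partition of `2n` -/
def IsIntervalS (f : ℕ → ℕ) (Δ : Set ℕ) : Prop :=
  (∃ a b, PairedS f a b ∧ Δ = {i | (i = 0 ∨ 1 ≤ mult f i) ∧ b ≤ i ∧ i ≤ a}) ∨
  (∃ i, Even i ∧ (i = 0 ∨ (2 ≤ i ∧ 1 ≤ mult f i)) ∧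
    (¬ ∃ a b, PairedS f a b ∧ b ≤ i ∧ i ≤ a) ∧ Δ = {i})

/-- `a = i_{2h-1}` and `b = i_{2h}` for some `h` (orthogonal partitions of `2n`) -/
def PairedOE (f : ℕ → ℕ) (a b : ℕ) : Prop :=
  b < a ∧ a ∈ OddSet f ∧ b ∈ OddSet f ∧ Even ((OddSet f ∩ Set.Ioi a).ncard) ∧
    OddSet f ∩ Set.Ioo b a = ∅

/-- intervals of a special orthogonal partition of `2n` -/
def IsIntervalOE (f : ℕ → ℕ) (Δ : Set ℕ) : Prop :=
  (∃ a b, PairedOE f a b ∧ Δ = {i | 1 ≤ mult f i ∧ b ≤ i ∧ i ≤ a}) ∨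
  (∃ i, Odd i ∧ 1 ≤ mult f i ∧ (¬ ∃ a b, PairedOE f a b ∧ b ≤ i ∧ i ≤ a) ∧ Δ = {i})

/-- `a = i_{2h}` and `b = i_{2h+1}` for some `h ≥ 1` (orthogonal partitions of `2n+1`) -/
def PairedOO (f : ℕ → ℕ) (a b : ℕ) : Prop :=
  b < a ∧ a ∈ OddSet f ∧ b ∈ OddSet f ∧ Odd ((OddSet f ∩ Set.Ioi a).ncard) ∧
    OddSet f ∩ Set.Ioo b a = ∅

/-- intervals of a special orthogonal partition of `2n+1` (convention `i_0 = ∞`) -/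
def IsIntervalOO (f : ℕ → ℕ) (Δ : Set ℕ) : Prop :=
  (∃ b, b ∈ OddSet f ∧ OddSet f ∩ Set.Ioi b = ∅ ∧ Δ = {i | 1 ≤ mult f i ∧ b ≤ i}) ∨
  (∃ a b, PairedOO f a b ∧ Δ = {i | 1 ≤ mult f i ∧ b ≤ i ∧ i ≤ a}) ∨
  (∃ i, Odd i ∧ 1 ≤ mult f i ∧
    (¬ ((∃ b, b ∈ OddSet f ∧ OddSet f ∩ Set.Ioi b = ∅ ∧ b ≤ i) ∨
        (∃ a b, PairedOO f a b ∧ b ≤ i ∧ i ≤ a))) ∧ Δ = {i})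

/-- `J(Δ) = {j ≥ 1 : λ_j ∈ Δ}` -/
def Jset (f : ℕ → ℕ) (Δ : Set ℕ) : Set ℕ := {j | 1 ≤ j ∧ f j ∈ Δ}

/-- `ζ(λ)` for a special symplectic partition (`j_max(Δ_min) = ∞`, so the smallest
interval contributes no `-1`: its `J`-set has no greatest element). -/
noncomputable def zetaS (f : ℕ → ℕ) : ℕ → ℤ := fun j =>
  if ∃ Δ, IsIntervalS f Δ ∧ IsLeast (Jset f Δ) j then 1
  else if ∃ Δ, IsIntervalS f Δ ∧ IsGreatest (Jset f Δ) j then -1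
  else 0

/-- `ζ(λ)` for a special orthogonal partition of `2n` -/
noncomputable def zetaOE (f : ℕ → ℕ) : ℕ → ℤ := fun j =>
  if ∃ Δ, IsIntervalOE f Δ ∧ IsLeast (Jset f Δ) j then 1
  else if ∃ Δ, IsIntervalOE f Δ ∧ IsGreatest (Jset f Δ) j then -1
  else 0

/-- `J^+` for `λ1` special symplectic and `λ2` special orthogonal (of `2n2`) -/
def JplusSet (f1 f2 : ℕ → ℕ) : Set ℕ :=
  {j | 1 ≤ j ∧ Even (f1 j) ∧ Odd (f2 j) ∧
    ((∃ Δ, IsIntervalS f1 Δ ∧ IsLeast (Jset f1 Δ) j) ∨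
     (∃ Δ, IsIntervalOE f2 Δ ∧ IsLeast (Jset f2 Δ) j))}

/-- `J^-` -/
def JminusSet (f1 f2 : ℕ → ℕ) : Set ℕ :=
  {j | 1 ≤ j ∧ Even (f1 j) ∧ Odd (f2 j) ∧
    ((∃ Δ, IsIntervalS f1 Δ ∧ IsGreatest (Jset f1 Δ) j) ∨
     (∃ Δ, IsIntervalOE f2 Δ ∧ IsGreatest (Jset f2 Δ) j))}

/-- the sequence `ξ` -/
noncomputable def xi (f1 f2 : ℕ → ℕ) : ℕ → ℤ := fun j =>
  if j ∈ JplusSet f1 f2 then 1 else if j ∈ JminusSet f1 f2 then -1 else 0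

/-- partial sums of an integer-valued sequence indexed from 1 -/
def Sz (f : ℕ → ℤ) (k : ℕ) : ℤ := ∑ j ∈ Finset.Icc 1 k, f j

/-- `g` is the greatest orthogonal partition of `N` which is dominated by the
sequence `t` (used to define the Spaltenstein-type duality `d`). -/
def IsDualOf (g : ℕ → ℕ) (N : ℕ) (t : ℕ → ℕ) : Prop :=
  (IsPartition g N ∧ Orth g ∧ Dom g t) ∧
  ∀ ν, IsPartition ν N → Orth ν → Dom ν t → Dom ν g

/-- `g = d(f)` for `f` a symplectic partition of `2m`: the greatest orthogonal
partition of `2m+1` dominated by `^t(f ∪ (1))`. -/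
def IsSympDual (g : ℕ → ℕ) (m : ℕ) (f : ℕ → ℕ) : Prop :=
  IsDualOf g (2*m+1) (transpose (unionP f one1))

/-- `g = d(f)` for `f` an orthogonal partition of `2m`: the greatest orthogonal
partition of `2m` dominated by `^tf`. -/
def IsOrthDual (g : ℕ → ℕ) (m : ℕ) (f : ℕ → ℕ) : Prop :=
  IsDualOf g (2*m) (transpose f)


/-!
Write `Φ_f(c) = ∑ⱼ min(f j, c)` for the number of boxes in the first `c` columns of `f`. For
partitions of the same size, `f ≤ g` in dominance iff `Φ_g ≤ Φ_f`, and a partition of an odd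
number is orthogonal iff `Φ_f(c)` is odd for every odd `c`.

Put `A = ∑ⱼ 2·ᵗλⱼ` and `τ = ᵗλ₀ + ᵗ(1) = ᵗ(λ₀ ∪ (1))`. Then `ᵗ(cup(𝛌) ∪ (1)) = A + τ`, so
`d(cup(𝛌))` is the greatest orthogonal partition below `A + τ` and `ind(d(𝛌))` the greatest one below
`A + d(λ₀)`. As `d(λ₀) ≤ τ`, the first dominates the second, and it remains to show
`d(cup(𝛌)) ≤ A + d(λ₀)`, which follows from `Φ_A(u) + Φ_{d(λ₀)}(c) ≤ Φ_{d(cup(𝛌))}(u + c)`.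
For even `u` the function `c ↦ min(Φ_{d(cup(𝛌))}(u + c) - Φ_A(u), Φ_{d(λ₀)}(c))` is concave and odd
at odd `c`, hence it is `Φ_σ` for an orthogonal partition `σ`; it dominates `Φ_τ`, so `σ ≤ τ`,
whence `σ ≤ d(λ₀)` by maximality, which is the inequality. Odd `u` reduce to even ones because the
parts of `A` are even.
-/

open Finset

def ZeroAbove (f : ℕ → ℕ) (M : ℕ) : Prop := ∀ j, M < j → f j = 0

def AntitoneFromOne (f : ℕ → ℕ) : Prop := ∀ ⦃j k : ℕ⦄, 1 ≤ j → j ≤ k → f k ≤ f j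

/-- `colLen f c M` and `colSum f c M` are the length of the `c`-th column and the number of boxes
in the first `c` columns of the Young diagram of `f`, provided `f` vanishes above `M`. -/
def colLen (f : ℕ → ℕ) (c M : ℕ) : ℕ := #{j ∈ Icc 1 M | c ≤ f j}

def colSum (f : ℕ → ℕ) (c M : ℕ) : ℕ := ∑ j ∈ Icc 1 M, min (f j) c

variable {f g : ℕ → ℕ} {c i j k B M N N' : ℕ}

lemma ZeroAbove.mono (hf : ZeroAbove f B) (hB : B ≤ M) : ZeroAbove f M :=
  fun j hj => hf j (hB.trans_lt hj)

section PartialSums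

lemma S_succ (f : ℕ → ℕ) (k : ℕ) : S f (k + 1) = S f k + f (k + 1) :=
  sum_Icc_succ_top (by omega) f

lemma S_congr (h : ∀ j, 1 ≤ j → f j = g j) (k : ℕ) : S f k = S g k :=
  sum_congr rfl fun j hj => h j (mem_Icc.mp hj).1

lemma S_add (f g : ℕ → ℕ) (k : ℕ) : S (fun j => f j + g j) k = S f k + S g k :=
  sum_add_distrib

lemma S_mono (f : ℕ → ℕ) (h : k ≤ M) : S f k ≤ S f M :=
  sum_le_sum_of_subset (Icc_subset_Icc le_rfl h)

lemma S_eq_of_zeroAbove (hf : ZeroAbove f B) (h : B ≤ M) : S f M = S f B :=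
  (sum_subset (Icc_subset_Icc le_rfl h) fun j hj hjB => by
    simp only [mem_Icc] at hj hjB
    exact hf j (by omega)).symm

lemma sum_Icc_one_eq_add (g : ℕ → ℕ) (h : k ≤ M) :
    ∑ j ∈ Icc 1 M, g j = ∑ j ∈ Icc 1 k, g j + ∑ j ∈ Ioc k M, g j := by
  have h₀ : ∀ m, Icc 1 m = Ioc 0 m := Icc_add_one_left_eq_Ioc 0
  rw [h₀, h₀, sum_Ioc_consecutive g (Nat.zero_le k) h]

lemma eq_of_dom_of_dom (hfg : Dom f g) (hgf : Dom g f) (hk : 1 ≤ k) : f k = g k := by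
  obtain ⟨k, rfl⟩ : ∃ k', k = k' + 1 := ⟨k - 1, by omega⟩
  have h₁ := S_succ f k
  have h₂ := S_succ g k
  have := (hfg k).antisymm (hgf k)
  have := (hfg (k + 1)).antisymm (hgf (k + 1))
  omega

end PartialSums

section Partitions

lemma IsPartition.S_le (hf : IsPartition f N) (k : ℕ) : S f k ≤ N := by
  obtain ⟨m, hm⟩ := hf.fin
  calc S f k ≤ S f (max k m) := S_mono f (le_max_left _ _)
    _ = N := hf.total _ fun j hj => hm j (by omega)

lemma IsPartition.zeroAbove (hf : IsPartition f N) : ZeroAbove f N := by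
  intro j hj
  by_contra hne
  have hpos : ∀ i ∈ Icc 1 j, 1 ≤ f i := fun i hi =>
    (Nat.one_le_iff_ne_zero.mpr hne).trans (hf.mono (mem_Icc.mp hi).1 (mem_Icc.mp hi).2)
  have : j ≤ S f j := by simpa [S] using card_nsmul_le_sum _ _ 1 hpos
  have := hf.S_le j
  omega

lemma IsPartition.S_eq (hf : IsPartition f N) (hM : N ≤ M) : S f M = N :=
  hf.total M (hf.zeroAbove.mono hM)

lemma IsPartition.apply_le (hf : IsPartition f N) (hj : 1 ≤ j) : f j ≤ N :=
  calc f j ≤ f 1 := hf.mono le_rfl hj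
    _ = S f 1 := by simp [S]
    _ ≤ N := hf.S_le 1

lemma IsPartition.of_zeroAbove (hm : AntitoneFromOne f) (hz : ZeroAbove f M) (hS : S f M = N) :
    IsPartition f N where
  mono := hm
  fin := ⟨M, hz⟩
  total m hm' := by
    rw [← S_eq_of_zeroAbove hm' (le_max_left m M), ← hS,
      S_eq_of_zeroAbove hz (le_max_right m M)]

lemma IsPartition.add (hf : IsPartition f N) (hg : IsPartition g N') :
    IsPartition (fun j => f j + g j) (N + N') := by
  refine .of_zeroAbove (M := N + N') (fun j k hj hjk => add_le_add (hf.mono hj hjk)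
    (hg.mono hj hjk)) (fun j hj => ?_) ?_
  · rw [hf.zeroAbove j (by omega), hg.zeroAbove j (by omega)]
  · rw [S_add, hf.S_eq (by omega), hg.S_eq (by omega)]

lemma IsPartition.mul_left (a : ℕ) (hf : IsPartition f N) :
    IsPartition (fun j => a * f j) (a * N) := by
  refine .of_zeroAbove (M := N) (fun j k hj hjk => Nat.mul_le_mul_left a (hf.mono hj hjk))
    (fun j hj => by rw [hf.zeroAbove j hj, mul_zero]) ?_
  rw [S, ← mul_sum, ← S, hf.S_eq le_rfl]

lemma IsPartition.sum {ι : Type*} (s : Finset ι) {F : ι → ℕ → ℕ} {n : ι → ℕ}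
    (hF : ∀ i ∈ s, IsPartition (F i) (n i)) :
    IsPartition (fun j => ∑ i ∈ s, F i j) (∑ i ∈ s, n i) := by
  induction s using Finset.induction_on with
  | empty => exact .of_zeroAbove (M := 0) (fun _ _ _ _ => le_rfl) (fun _ _ => rfl) rfl
  | insert a s ha ih =>
    simp only [sum_insert ha]
    exact (hF a (mem_insert_self a s)).add (ih fun i hi => hF i (mem_insert_of_mem hi))

lemma isPartition_one1 : IsPartition one1 1 :=
  .of_zeroAbove (M := 1) (fun j k hj hjk => by simp only [one1]; split_ifs <;> omega)
    (fun j hj => if_neg (by omega)) (by simp [S, one1])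

end Partitions

section Columns

lemma colLen_le (f : ℕ → ℕ) (c M : ℕ) : colLen f c M ≤ M :=
  (card_filter_le _ _).trans (by simp)

lemma colLen_anti (f : ℕ → ℕ) (h : c ≤ i) (M : ℕ) : colLen f i M ≤ colLen f c M :=
  card_le_card (monotone_filter_right _ fun _ _ hj => h.trans hj)

lemma colLen_eq_zero (h : ∀ j, 1 ≤ j → f j < c) (M : ℕ) : colLen f c M = 0 := by
  rw [colLen, card_eq_zero, filter_eq_empty_iff]
  intro j hj
  exact not_le.mpr (h j (mem_Icc.mp hj).1)

lemma ncard_setOf_eq_card_filter_Icc (hz : ZeroAbove f M) {P : ℕ → Prop} [DecidablePred P]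
    (hP : ∀ j, P j → f j ≠ 0) : {j | 1 ≤ j ∧ P j}.ncard = #{j ∈ Icc 1 M | P j} := by
  rw [← Set.ncard_coe_finset]
  congr 1
  ext j
  simp only [Set.mem_ofPred_eq, coe_filter, mem_Icc]
  exact ⟨fun ⟨h1, h2⟩ => ⟨⟨h1, by_contra fun h => hP j h2 (hz j (by omega))⟩, h2⟩,
    fun ⟨⟨h1, _⟩, h2⟩ => ⟨h1, h2⟩⟩

lemma transpose_eq_colLen (hz : ZeroAbove f M) (hc : 1 ≤ c) : transpose f c = colLen f c M := by
  have : {i | 1 ≤ i ∧ 1 ≤ c ∧ c ≤ f i} = {i | 1 ≤ i ∧ c ≤ f i} := by simp [hc]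
  rw [transpose, this, colLen, ncard_setOf_eq_card_filter_Icc hz fun j hj => by omega]

lemma mult_add_colLen_succ (hz : ZeroAbove f M) (hi : 1 ≤ i) :
    mult f i + colLen f (i + 1) M = colLen f i M := by
  rw [mult, ncard_setOf_eq_card_filter_Icc hz fun j hj => by omega, colLen, colLen,
    ← card_union_of_disjoint (disjoint_filter.mpr fun j _ h => by omega), ← filter_or]
  congr 1
  exact filter_congr fun j _ => by omega

lemma colSum_zero (f : ℕ → ℕ) (M : ℕ) : colSum f 0 M = 0 := by simp [colSum]

lemma colSum_succ (f : ℕ → ℕ) (c M : ℕ) :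
    colSum f (c + 1) M = colSum f c M + colLen f (c + 1) M := by
  rw [colSum, colLen, card_filter, colSum, ← sum_add_distrib]
  exact sum_congr rfl fun j _ => by split_ifs <;> omega

lemma colSum_mono (f : ℕ → ℕ) (h : c ≤ i) (M : ℕ) : colSum f c M ≤ colSum f i M :=
  sum_le_sum fun j _ => by omega

lemma colSum_concave (f : ℕ → ℕ) (c M : ℕ) :
    colSum f (c + 2) M + colSum f c M ≤ 2 * colSum f (c + 1) M := by
  have := colSum_succ f c M
  have : colSum f (c + 2) M = _ := colSum_succ f (c + 1) M
  have := colLen_anti f (Nat.le_add_right (c + 1) 1) M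
  omega

lemma colSum_eq_S (h : ∀ j, 1 ≤ j → f j ≤ c) (M : ℕ) : colSum f c M = S f M :=
  sum_congr rfl fun j hj => min_eq_left (h j (mem_Icc.mp hj).1)

lemma colSum_eq_sum_colLen (f : ℕ → ℕ) (c M : ℕ) :
    colSum f c M = ∑ i ∈ Icc 1 c, colLen f i M := by
  induction c with
  | zero => simp [colSum_zero]
  | succ c ih => rw [colSum_succ, ih, sum_Icc_succ_top (by omega)]

lemma colSum_add_colSum_le (f g : ℕ → ℕ) (c i M : ℕ) :
    colSum f c M + colSum g i M ≤ colSum (fun j => f j + g j) (c + i) M := by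
  rw [colSum, colSum, ← sum_add_distrib]
  exact sum_le_sum fun j _ => by dsimp only; omega

end Columns

section Transpose

lemma le_colLen_iff (hm : AntitoneFromOne f) (hz : ZeroAbove f M) (hi : 1 ≤ i) (hj : 1 ≤ j) :
    i ≤ colLen f j M ↔ j ≤ f i := by
  constructor
  · intro h
    by_contra! hlt
    have : colLen f j M ≤ #(Icc 1 (i - 1)) := card_le_card fun j' hj' => by
      simp only [mem_filter, mem_Icc] at hj' ⊢
      have : ¬ i ≤ j' := fun h => (hm hi h).trans_lt hlt |>.not_ge hj'.2
      omega
    simp only [Nat.card_Icc, add_tsub_cancel_right] at this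
    omega
  · intro h
    have hiM : i ≤ M := by_contra fun hiM => by rw [hz i (by omega)] at h; omega
    have : #(Icc 1 i) ≤ colLen f j M := card_le_card fun j' hj' => by
      simp only [mem_filter, mem_Icc] at hj' ⊢
      exact ⟨⟨hj'.1, hj'.2.trans hiM⟩, h.trans (hm hj'.1 hj'.2)⟩
    simpa using this

lemma colLen_colLen (hm : AntitoneFromOne f) (hz : ZeroAbove f M) (hi : 1 ≤ i) (hfi : f i ≤ M) :
    colLen (fun j => colLen f j M) i M = f i := by
  rw [colLen, filter_congr fun j hj => le_colLen_iff hm hz hi (mem_Icc.mp hj).1]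
  have : {j ∈ Icc 1 M | j ≤ f i} = Icc 1 (f i) := by
    ext j
    simp only [mem_filter, mem_Icc]
    omega
  simp [this]

lemma IsPartition.isPartition_transpose (hf : IsPartition f N) : IsPartition (transpose f) N := by
  have hcol : ∀ c, 1 ≤ c → transpose f c = colLen f c N :=
    fun c => transpose_eq_colLen hf.zeroAbove
  refine .of_zeroAbove (M := N) (fun j k hj hjk => ?_) (fun j hj => ?_) ?_
  · rw [hcol j hj, hcol k (hj.trans hjk)]
    exact colLen_anti f hjk N
  · rw [hcol j (by omega)]
    exact colLen_eq_zero (fun i hi => (hf.apply_le hi).trans_lt hj) N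
  · rw [S, sum_congr rfl fun c hc => hcol c (mem_Icc.mp hc).1, ← colSum_eq_sum_colLen,
      colSum_eq_S (fun j hj => hf.apply_le hj), hf.S_eq le_rfl]

lemma IsPartition.transpose_transpose (hf : IsPartition f N) (hk : 1 ≤ k) :
    transpose (transpose f) k = f k := by
  rw [transpose_eq_colLen hf.isPartition_transpose.zeroAbove hk]
  have : ∀ c ∈ Icc 1 N, transpose f c = colLen f c N :=
    fun c hc => transpose_eq_colLen hf.zeroAbove (mem_Icc.mp hc).1
  rw [colLen, filter_congr fun c hc => by rw [this c hc], ← colLen]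
  exact colLen_colLen hf.mono hf.zeroAbove hk (hf.apply_le hk)

lemma transpose_unionP (hf : IsPartition f N) (hg : IsPartition g N') (hk : 1 ≤ k) :
    transpose (unionP f g) k = transpose f k + transpose g k :=
  (hf.isPartition_transpose.add hg.isPartition_transpose).transpose_transpose hk

end Transpose

section Dominance

lemma S_add_colSum_le (f : ℕ → ℕ) (c : ℕ) (hk : k ≤ M) :
    S f k + colSum f c M ≤ S f M + k * c := by
  rw [S, S, colSum, sum_Icc_one_eq_add _ hk, sum_Icc_one_eq_add f hk]
  have h₁ : ∑ j ∈ Icc 1 k, min (f j) c ≤ k * c := by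
    simpa using sum_le_card_nsmul (Icc 1 k) (fun j => min (f j) c) c fun j _ => min_le_right _ _
  have h₂ : ∑ j ∈ Ioc k M, min (f j) c ≤ ∑ j ∈ Ioc k M, f j :=
    sum_le_sum fun j _ => min_le_left _ _
  omega

lemma colSum_add_S_of_threshold (h₁ : ∀ j, 1 ≤ j → j ≤ k → c ≤ f j) (h₂ : ∀ j, k < j → f j ≤ c)
    (hk : k ≤ M) : colSum f c M + S f k = S f M + k * c := by
  rw [S, S, colSum, sum_Icc_one_eq_add _ hk, sum_Icc_one_eq_add f hk,
    sum_congr rfl fun j hj => min_eq_right (h₁ j (mem_Icc.mp hj).1 (mem_Icc.mp hj).2),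
    sum_congr rfl fun j hj => min_eq_left (h₂ j (mem_Ioc.mp hj).1)]
  simp only [sum_const, Nat.card_Icc, add_tsub_cancel_right, smul_eq_mul]
  ring

lemma colSum_le_of_dom (hf : IsPartition f N) (hg : IsPartition g N) (hM : N ≤ M) (h : Dom f g)
    (c : ℕ) : colSum g c M ≤ colSum f c M := by
  have hrows := fun j (hj : 1 ≤ j) =>
    le_colLen_iff (j := c + 1) hf.mono (hf.zeroAbove.mono hM) hj (by omega)
  have hk := colLen_le f (c + 1) M
  have hf' := colSum_add_S_of_threshold (f := f) (c := c)
    (fun j hj hjk => Nat.le_of_succ_le ((hrows j hj).1 hjk))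
    (fun j hjk => by have := (hrows j (by omega)).not.1 (by omega); omega) hk
  have hg' := S_add_colSum_le g c hk
  have := h (colLen f (c + 1) M)
  rw [hf.S_eq hM] at hf'
  rw [hg.S_eq hM] at hg'
  omega

lemma dom_add_of_colSum_add_le {A B D : ℕ → ℕ} {NA NB : ℕ} (hA : IsPartition A NA)
    (hB : IsPartition B NB) (hD : IsPartition D (NA + NB)) (hM : NA + NB ≤ M)
    (h : ∀ u c, colSum A u M + colSum B c M ≤ colSum D (u + c) M) :
    Dom D (fun j => A j + B j) := by
  intro k
  rw [S_add]
  rcases le_or_gt k M with hk | hk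
  · have hA' := colSum_add_S_of_threshold (f := A) (c := A (k + 1))
      (fun j hj _ => hA.mono hj (by omega)) (fun j hj => hA.mono (by omega) hj) hk
    have hB' := colSum_add_S_of_threshold (f := B) (c := B (k + 1))
      (fun j hj _ => hB.mono hj (by omega)) (fun j hj => hB.mono (by omega) hj) hk
    have hD' := S_add_colSum_le D (A (k + 1) + B (k + 1)) hk
    have := h (A (k + 1)) (B (k + 1))
    rw [hA.S_eq (M := M) (by omega)] at hA'
    rw [hB.S_eq (M := M) (by omega)] at hB'
    rw [hD.S_eq hM, mul_add] at hD'
    omega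
  · rw [hA.S_eq (M := k) (by omega), hB.S_eq (M := k) (by omega), hD.S_eq (by omega)]

lemma dom_of_colSum_le (hf : IsPartition f N) (hg : IsPartition g N) (hM : N ≤ M)
    (h : ∀ c, colSum g c M ≤ colSum f c M) : Dom f g := by
  have h0 : IsPartition (fun _ => 0) 0 := .of_zeroAbove (M := 0) (fun _ _ _ _ => le_rfl)
    (fun _ _ => rfl) rfl
  have := dom_add_of_colSum_add_le (A := fun _ => 0) (B := g) (D := f) (M := M) h0 hg
    (by rwa [zero_add]) (by rwa [zero_add]) fun u c => by
      simpa [colSum] using (h c).trans (colSum_mono f (Nat.le_add_left c u) M)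
  simpa using this

end Dominance

section Parity

lemma IsPartition.odd_colSum (hf : IsPartition f N) (ho : Orth f) (hN : Odd N) (hM : N ≤ M)
    (hc : Odd c) : Odd (colSum f c M) := by
  have step : ∀ c, Odd c → colSum f (c + 2) M % 2 = colSum f c M % 2 := by
    intro c hc
    have := colSum_succ f c M
    have : colSum f (c + 2) M = _ := colSum_succ f (c + 1) M
    have := mult_add_colLen_succ (hf.zeroAbove.mono hM) (Nat.le_add_left 1 c)
    have := Nat.even_iff.mp (ho (c + 1) hc.add_one (Nat.le_add_left 1 c))
    omega
  have hshift : ∀ t, colSum f (c + 2 * t) M % 2 = colSum f c M % 2 := by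
    intro t
    induction t with
    | zero => rfl
    | succ t ih =>
      rw [show c + 2 * (t + 1) = c + 2 * t + 2 by ring, step _ (hc.add_even (even_two_mul t)), ih]
  have := hshift N
  rw [colSum_eq_S (fun j hj => (hf.apply_le hj).trans (by omega)), hf.S_eq hM] at this
  rw [Nat.odd_iff] at hN ⊢
  omega

lemma orth_of_odd_colSum (hz : ZeroAbove f M) (h : ∀ c, Odd c → Odd (colSum f c M)) : Orth f := by
  intro i hi hi1
  obtain ⟨i, rfl⟩ : ∃ i', i = i' + 1 := ⟨i - 1, by omega⟩
  have := mult_add_colLen_succ hz hi1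
  have := colSum_succ f i M
  have : colSum f (i + 2) M = _ := colSum_succ f (i + 1) M
  have := Nat.even_iff.mp hi
  have := Nat.odd_iff.mp (h i (Nat.odd_iff.mpr (by omega)))
  have := Nat.odd_iff.mp (h (i + 2) (Nat.odd_iff.mpr (by omega)))
  rw [Nat.even_iff]
  omega

lemma colSum_even (hf : ∀ j, Even (f j)) (hc : Even c) (M : ℕ) : Even (colSum f c M) :=
  even_sum _ fun j _ => by rcases min_choice (f j) c with h | h <;> rw [h]; exacts [hf j, hc]

lemma colLen_succ_eq_of_even (hf : ∀ j, Even (f j)) (hc : Odd c) (M : ℕ) :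
    colLen f (c + 1) M = colLen f c M := by
  rw [colLen, colLen]
  congr 1
  refine filter_congr fun j _ => ?_
  have := Nat.even_iff.mp (hf j)
  have := Nat.odd_iff.mp hc
  omega

end Parity

section KeyInequality

lemma exists_isPartition_colSum_eq {F : ℕ → ℕ} (h0 : F 0 = 0) (hmono : Monotone F)
    (hconc : ∀ c, F (c + 2) + F c ≤ 2 * F (c + 1)) (hstab : ∀ c, M ≤ c → F c = N) (hN : N ≤ M) :
    ∃ σ, IsPartition σ N ∧ ∀ c, colSum σ c M = F c := by
  set ρ : ℕ → ℕ := fun c => F c - F (c - 1)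
  have hρ : ∀ c, ρ (c + 1) = F (c + 1) - F c := fun c => rfl
  have hρ_succ : ∀ c, ρ (c + 2) ≤ ρ (c + 1) := fun c => by
    have := hconc c
    have := hmono (Nat.le_add_right c 1)
    have := hmono (Nat.le_add_right (c + 1) 1)
    show F (c + 2) - F (c + 1) ≤ F (c + 1) - F c
    omega
  have hρ_anti : AntitoneFromOne ρ := by
    intro j k hj hjk
    induction k, hjk using Nat.le_induction with
    | base => exact le_rfl
    | succ k hk ih =>
      obtain ⟨k, rfl⟩ : ∃ k', k = k' + 1 := ⟨k - 1, by omega⟩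
      exact (hρ_succ k).trans ih
  have hρ_zero : ZeroAbove ρ M := fun c hc => by
    simp only [ρ, hstab c hc.le, hstab (c - 1) (by omega), Nat.sub_self]
  have hρ_le : ∀ c, ρ c ≤ N := fun c =>
    (Nat.sub_le _ _).trans ((hmono (le_max_left c M)).trans (hstab _ (le_max_right c M)).le)
  have hS : ∀ c, S ρ c = F c := by
    intro c
    induction c with
    | zero => simp [S, h0]
    | succ c ih =>
      have := hmono (Nat.le_add_right c 1)
      rw [S_succ, ih, hρ]
      omega
  have hσ : ∀ c, colSum (fun j => colLen ρ j M) c M = F c := fun c => by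
    rw [colSum_eq_sum_colLen, sum_congr rfl fun i hi => colLen_colLen hρ_anti hρ_zero
      (mem_Icc.mp hi).1 ((hρ_le i).trans hN), ← S, hS]
  -- `σ` is the conjugate of the sequence `ρ` of increments of `F`, so `Φ_σ` sums up `ρ`.
  refine ⟨fun j => colLen ρ j M, .of_zeroAbove (M := M) (fun j k _ hjk => colLen_anti ρ hjk M)
    (fun j hj => colLen_eq_zero (fun c _ => (hρ_le c).trans_lt (by omega)) M) ?_, hσ⟩
  rw [← colSum_eq_S (fun j _ => colLen_le ρ j M), hσ, hstab M le_rfl]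

lemma IsDualOf.colSum_le_of_concave {τ d F : ℕ → ℕ} (hτ : IsPartition τ N)
    (hd : IsDualOf d N τ) (hNM : N ≤ M) (h0 : F 0 = 0) (hmono : Monotone F)
    (hconc : ∀ c, F (c + 2) + F c ≤ 2 * F (c + 1)) (hstab : ∀ c, M ≤ c → F c = N)
    (hodd : ∀ c, Odd c → Odd (F c)) (hτF : ∀ c, colSum τ c M ≤ F c) (c : ℕ) :
    colSum d c M ≤ F c := by
  obtain ⟨σ, hσ, hσF⟩ := exists_isPartition_colSum_eq h0 hmono hconc hstab hNM
  have hσO : Orth σ := orth_of_odd_colSum (hσ.zeroAbove.mono hNM) fun c hc => hσF c ▸ hodd c hc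
  have hστ : Dom σ τ := dom_of_colSum_le hσ hτ hNM fun c => hσF c ▸ hτF c
  exact hσF c ▸ colSum_le_of_dom hσ hd.1.1 hNM (hd.2 σ hσ hσO hστ) c

lemma colSum_add_le_of_isDualOf {τ d D : ℕ → ℕ} {m K u : ℕ}
    (hτ : IsPartition τ (2 * m + 1)) (hd : IsDualOf d (2 * m + 1) τ)
    (hD : IsPartition D N) (hDO : Orth D) (hN : Odd N) (hmM : 2 * m + 1 ≤ M) (hNM : N ≤ M)
    (hK : Even K) (hu : Even u) (hle : ∀ c, K + colSum τ c M ≤ colSum D (u + c) M) (c : ℕ) :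
    K + colSum d c M ≤ colSum D (u + c) M := by
  have ⟨⟨hdP, hdO, hdτ⟩, _⟩ := hd
  have hK_le : ∀ c, K ≤ colSum D (u + c) M := fun c => (Nat.le_add_right _ _).trans (hle c)
  set F : ℕ → ℕ := fun c => min (colSum D (u + c) M - K) (colSum d c M)
  have hF0 : F 0 = 0 := by simp [F, colSum_zero]
  have hF_mono : Monotone F := fun a b hab =>
    min_le_min (Nat.sub_le_sub_right (colSum_mono D (by omega) M) K) (colSum_mono d hab M)
  have hF_conc : ∀ c, F (c + 2) + F c ≤ 2 * F (c + 1) := fun c => by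
    have := colSum_concave D (u + c) M
    have := colSum_concave d c M
    have := hK_le c
    have := colSum_mono D (Nat.le_add_right (u + c) 1) M
    have := colSum_mono D (Nat.le_add_right (u + c) 2) M
    simp only [F, ← add_assoc]
    omega
  have hF_stab : ∀ c, M ≤ c → F c = 2 * m + 1 := fun c hc => by
    have hd_c : colSum d c M = 2 * m + 1 := by
      rw [colSum_eq_S (fun j hj => (hdP.apply_le hj).trans (by omega)), hdP.S_eq hmM]
    have hτ_c : colSum τ c M = 2 * m + 1 := by
      rw [colSum_eq_S (fun j hj => (hτ.apply_le hj).trans (by omega)), hτ.S_eq hmM]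
    have := hle c
    simp only [F, hd_c]
    omega
  have hF_odd : ∀ c, Odd c → Odd (F c) := fun c hc => by
    have h₁ := Nat.odd_iff.mp (hD.odd_colSum hDO hN hNM (hu.add_odd hc))
    have h₂ := Nat.odd_iff.mp (hdP.odd_colSum hdO (odd_two_mul_add_one m) hmM hc)
    have := Nat.even_iff.mp hK
    have := hK_le c
    simp only [F, Nat.odd_iff]
    omega
  have hτF : ∀ c, colSum τ c M ≤ F c := fun c =>
    le_min (Nat.le_sub_of_add_le' (hle c)) (colSum_le_of_dom hdP hτ hmM hdτ c)
  have := (hd.colSum_le_of_concave hτ hmM hF0 hF_mono hF_conc hF_stab hF_odd hτF c).trans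
    (min_le_left _ _)
  have := hK_le c
  omega

lemma colSum_add_le_of_even_shifts {A B D : ℕ → ℕ} (hA : ∀ j, Even (A j))
    (h : ∀ u, Even u → ∀ c, colSum A u M + colSum B c M ≤ colSum D (u + c) M) (u c : ℕ) :
    colSum A u M + colSum B c M ≤ colSum D (u + c) M := by
  rcases Nat.even_or_odd u with hu | ⟨r, rfl⟩
  · exact h u hu c
  -- `A` has as many columns of length `2r + 1` as of `2r + 2`, so the shift `2r + 1` is handled by
  -- the shift `2r` or `2r + 2` according as `D` has fewer or more columns of length `2r + c + 1`.
  have h₁ := h (2 * r) (even_two_mul r) c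
  have h₂ := h (2 * r + 2) (by simp [Nat.even_add, parity_simps]) c
  have hA₁ := colSum_succ A (2 * r) M
  have hA₂ : colSum A (2 * r + 2) M = _ := colSum_succ A (2 * r + 1) M
  have hA_eq := colLen_succ_eq_of_even hA (odd_two_mul_add_one r) M
  have hD₁ : colSum D (2 * r + 1 + c) M = colSum D (2 * r + c) M + colLen D (2 * r + c + 1) M := by
    rw [← colSum_succ, add_right_comm]
  have hD₂ : colSum D (2 * r + 2 + c) M =
      colSum D (2 * r + 1 + c) M + colLen D (2 * r + c + 2) M := by
    rw [show 2 * r + 2 + c = 2 * r + 1 + c + 1 by ring, colSum_succ]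
    ring_nf
  have hD_anti := colLen_anti D (show 2 * r + c + 1 ≤ 2 * r + c + 2 by omega) M
  omega

end KeyInequality

lemma isDualOf_congr {t t' : ℕ → ℕ} (h : ∀ k, 1 ≤ k → t k = t' k) :
    IsDualOf g N t ↔ IsDualOf g N t' := by
  have hdom : ∀ ν, Dom ν t ↔ Dom ν t' := fun ν => by simp only [Dom, S_congr h]
  simp only [IsDualOf, hdom]

theorem stmt2_general (t : ℕ) (nn : Fin t → ℕ) (n0 n : ℕ)
    (hn : n = (∑ j, nn j) + n0)
    (lam : Fin t → ℕ → ℕ) (hlam : ∀ j, IsPartition (lam j) (nn j))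
    (lam0 : ℕ → ℕ) (hlam0 : IsPartition lam0 (2*n0))
    (cup : ℕ → ℕ)
    (hcup : cup = transpose (fun k => (∑ j, 2 * transpose (lam j) k) + transpose lam0 k))
    (dcup d0 indd : ℕ → ℕ)
    (hdcup : IsSympDual dcup n cup)
    (hd0 : IsSympDual d0 n0 lam0)
    (hindd : IsDualOf indd (2*n+1) (fun k => (∑ j, 2 * transpose (lam j) k) + d0 k)) :
    ∀ k, 1 ≤ k → dcup k = indd k := by
  set A : ℕ → ℕ := fun k => ∑ j, 2 * transpose (lam j) k
  set τ : ℕ → ℕ := fun k => transpose lam0 k + transpose one1 k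
  have hA : IsPartition A (∑ j, 2 * nn j) :=
    .sum _ fun j _ => (hlam j).isPartition_transpose.mul_left 2
  have hA_even : ∀ k, Even (A k) := fun k => even_sum _ fun j _ => even_two_mul _
  have hτ : IsPartition τ (2 * n0 + 1) :=
    hlam0.isPartition_transpose.add isPartition_one1.isPartition_transpose
  have hN : ∑ j, 2 * nn j + (2 * n0 + 1) = 2 * n + 1 := by rw [← mul_sum]; omega
  have hAτ : IsPartition (fun k => A k + τ k) (2 * n + 1) := hN ▸ hA.add hτ
  have htcup := hA.add hlam0.isPartition_transpose
  replace hd0 : IsDualOf d0 (2 * n0 + 1) τ :=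
    (isDualOf_congr fun k hk => transpose_unionP hlam0 isPartition_one1 hk).1 hd0
  replace hdcup : IsDualOf dcup (2 * n + 1) (fun k => A k + τ k) := by
    refine (isDualOf_congr fun k hk => ?_).1 hdcup
    rw [transpose_unionP (hcup ▸ htcup.isPartition_transpose) isPartition_one1 hk, hcup,
      htcup.transpose_transpose hk, add_assoc]
  obtain ⟨⟨hdcupP, hdcupO, hdcupτ⟩, hdcup_max⟩ := hdcup
  obtain ⟨⟨hinddP, hinddO, hinddD⟩, hindd_max⟩ := hindd
  have h_key := colSum_add_le_of_even_shifts hA_even fun u hu =>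
    colSum_add_le_of_isDualOf hτ hd0 hdcupP hdcupO (odd_two_mul_add_one n) (by omega) le_rfl
      (colSum_even hA_even hu _) hu fun c =>
        (colSum_add_colSum_le A τ u c _).trans (colSum_le_of_dom hdcupP hAτ le_rfl hdcupτ _)
  have h_le : Dom dcup indd := hindd_max dcup hdcupP hdcupO
    (dom_add_of_colSum_add_le hA hd0.1.1 (hN ▸ hdcupP) hN.le h_key)
  have h_ge : Dom indd dcup := hdcup_max indd hinddP hinddO fun k =>
    (hinddD k).trans (by rw [S_add, S_add]; exact Nat.add_le_add_left (hd0.1.2.2 k) _)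
  exact fun k hk => eq_of_dom_of_dom h_le h_ge hk

/-- Lemma 1.8: `d(cup(𝛌)) = ind(d(𝛌))`. -/
theorem stmt2 (t : ℕ) (nn : Fin t → ℕ) (n0 n : ℕ)
    (hn : n = (∑ j, nn j) + n0)
    (lam : Fin t → ℕ → ℕ) (hlam : ∀ j, IsPartition (lam j) (nn j))
    (lam0 : ℕ → ℕ) (hlam0 : IsPartition lam0 (2*n0)) (hsymp0 : Symp lam0)
    (cup : ℕ → ℕ)
    (hcup : cup = transpose (fun k => (∑ j, 2 * transpose (lam j) k) + transpose lam0 k))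
    (dcup d0 indd : ℕ → ℕ)
    (hdcup : IsSympDual dcup n cup)
    (hd0 : IsSympDual d0 n0 lam0)
    (hindd : IsDualOf indd (2*n+1) (fun k => (∑ j, 2 * transpose (lam j) k) + d0 k)) :
    ∀ k, 1 ≤ k → dcup k = indd k :=
  stmt2_general t nn n0 n hn lam hlam lam0 hlam0 cup hcup dcup d0 indd hdcup hd0 hindd

end Wald
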